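/- Let λ be an infinite cardinal, c a positive integer, and n a positive integer such that, by Schur's theorem, every c-coloring of {1,…,n} admits a, b with a, b, a+b ≤ n monochromatic. If κ satisfies κ → (λ)ⁿ_{cⁿ}, then for every commutative semigroup (G,+) of cardinality κ and every f : G → c there exist H ⊆ G with |H| = λ and positive integers a, b with a+b ≤ n such that FS^{{a,b,a+b}}(H) is f-monochromatic. -/

import Mathlib

/-!
Colour an increasing `n`-tuple `x₀ < ⋯ < x_{n-1}` of a well-ordering of `G` by the vector of
colours of its partial sums `x₀ + ⋯ + x_j`. A homogeneous set `X` of size `λ` gives colours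
`r 0, …, r (n-1)` such that every sum of `j + 1` elements of `X` has colour `r j`, provided these
elements are the first `j + 1` entries of some increasing `n`-tuple from `X`. Dropping the finitely
many points of `X` with only finitely many points of `X` above them makes every such sum
extendable, and Schur's theorem applied to `k ↦ r (k - 1)` yields `a`, `b` with
`r (a-1) = r (b-1) = r (a+b-1)`.
-/

open Cardinal

universe u

/-- Sum of a nonempty tuple of elements of a commutative semigroup. -/
def tupSum {G : Type u} [AddCommSemigroup G] : {n : ℕ} → (Fin (n + 1) → G) → G
  | 0, g => g 0
  | _ + 1, g => tupSum (fun i => g i.castSucc) + g (Fin.last _)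

/-- `FSMono f A H i` : all sums of `j`-many pairwise distinct elements of `H`,
for `j ∈ A`, have color `i` under `f` (i.e. `FS^A(H)` is monochromatic of color `i`). -/
def FSMono {G : Type u} [AddCommSemigroup G] {c : ℕ} (f : G → Fin c)
    (A : Set ℕ) (H : Set G) (i : Fin c) : Prop :=
  ∀ m : ℕ, m + 1 ∈ A → ∀ g : Fin (m + 1) → G, Function.Injective g →
    (∀ j, g j ∈ H) → f (tupSum g) = i

section TupSum

variable {G : Type u} [AddCommSemigroup G]

theorem coe_tupSum : ∀ {m : ℕ} (g : Fin (m + 1) → G),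
    ((tupSum g : G) : WithZero G) = ∑ i, (g i : WithZero G)
  | 0, g => by simp [tupSum]
  | m + 1, g => by
    rw [tupSum, WithZero.coe_add, coe_tupSum]
    exact (Fin.sum_univ_castSucc fun i => (g i : WithZero G)).symm

theorem tupSum_comp_perm {m : ℕ} (g : Fin (m + 1) → G) (σ : Equiv.Perm (Fin (m + 1))) :
    tupSum (g ∘ σ) = tupSum g :=
  WithZero.coe_injective <| by
    rw [coe_tupSum, coe_tupSum]
    exact Equiv.sum_comp σ fun i => (g i : WithZero G)

end TupSum

theorem mk_sdiff_of_finite {β : Type*} {X B : Set β} (hX : ℵ₀ ≤ #X) (hB : B.Finite) :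
    #(X \ B : Set β) = #X := by
  refine le_antisymm (mk_le_mk_of_subset Set.sdiff_subset) (not_lt.1 fun hlt => ?_)
  exact (le_mk_sdiff_add_mk X B).not_gt (add_lt_of_lt hX hlt (hB.lt_aleph0.trans_le hX))

section WellOrder

variable {α : Type*} [LinearOrder α]

theorem strictMono_snoc {k : ℕ} {w : Fin k → α} (hw : StrictMono w) {y : α}
    (hy : ∀ j, w j < y) : StrictMono (Fin.snoc w y : Fin (k + 1) → α) := by
  rw [← Fin.insertNth_last', Fin.strictMono_insertNth_iff]
  exact ⟨hw, fun i _ => hy i, fun i hi => absurd hi (not_le.2 (Fin.castSucc_lt_last i))⟩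

def infiniteUpperPoints (X : Set α) : Set α :=
  {x ∈ X | {y ∈ X | x < y}.Infinite}

theorem infiniteUpperPoints_eq_sdiff (X : Set α) :
    infiniteUpperPoints X = X \ {x ∈ X | {y ∈ X | x < y}.Finite} := by
  ext x
  simp only [infiniteUpperPoints, Set.mem_ofPred_eq, Set.mem_sdiff, Set.Infinite]
  tauto

variable [WellFoundedLT α]

theorem finite_setOf_finite_upper (X : Set α) : {x ∈ X | {y ∈ X | x < y}.Finite}.Finite := by
  set B := {x ∈ X | {y ∈ X | x < y}.Finite}
  rcases B.eq_empty_or_nonempty with hB | hB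
  · simp [hB]
  obtain ⟨z, hzB, hzmin⟩ := WellFounded.has_min wellFounded_lt B hB
  refine (hzB.2.insert z).subset fun x hxB => ?_
  rcases (not_lt.1 (hzmin x hxB)).eq_or_lt with hzx | hzx
  · exact hzx ▸ Set.mem_insert z _
  · exact Set.mem_insert_of_mem z ⟨hxB.1, hzx⟩

theorem mk_infiniteUpperPoints {X : Set α} (hX : ℵ₀ ≤ #X) : #(infiniteUpperPoints X) = #X := by
  rw [infiniteUpperPoints_eq_sdiff]
  exact mk_sdiff_of_finite hX (finite_setOf_finite_upper X)

theorem exists_strictMono_snoc_extension {X : Set α} (d : ℕ) {k : ℕ} {x : Fin k → α}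
    (hx : StrictMono x) (hxX : ∀ j, x j ∈ X) (habove : {y ∈ X | ∀ j, x j < y}.Infinite) :
    ∃ w : Fin (k + d) → α, StrictMono w ∧ (∀ j, w j ∈ X) ∧
      (∀ i, w (Fin.castAdd d i) = x i) ∧ {y ∈ X | ∀ j, w j < y}.Infinite := by
  induction d with
  | zero => exact ⟨x, hx, hxX, fun _ => rfl, habove⟩
  | succ d ih =>
    obtain ⟨w, hw, hwX, hwx, hwabove⟩ := ih
    obtain ⟨y, hy, hymin⟩ := WellFounded.has_min wellFounded_lt _ hwabove.nonempty
    refine ⟨Fin.snoc w y, strictMono_snoc hw hy.2, fun j => ?_, fun i => ?_, ?_⟩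
    · induction j using Fin.lastCases <;> simp [hy.1, hwX]
    · simpa [← Fin.castSucc_castAdd] using hwx i
    · refine (hwabove.sdiff (Set.finite_singleton y)).mono ?_
      rintro z ⟨⟨hzX, hz⟩, hzy⟩
      have hyz : y < z := (not_lt.1 (hymin z ⟨hzX, hz⟩)).lt_of_ne (Ne.symm hzy)
      refine ⟨hzX, fun j => ?_⟩
      induction j using Fin.lastCases <;> simp [hyz, hz]

theorem exists_strictMono_extension {X : Set α} {k n : ℕ} (hkn : k ≤ n) {x : Fin k → α}
    (hx : StrictMono x) (hxX : ∀ j, x j ∈ X) (habove : {y ∈ X | ∀ j, x j < y}.Infinite) :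
    ∃ w : Fin n → α, StrictMono w ∧ (∀ j, w j ∈ X) ∧ ∀ i, w (Fin.castLE hkn i) = x i := by
  obtain ⟨d, rfl⟩ := Nat.exists_eq_add_of_le hkn
  obtain ⟨w, hw, hwX, hwx, -⟩ := exists_strictMono_snoc_extension d hx hxX habove
  exact ⟨w, hw, hwX, hwx⟩

end WellOrder

section PartialSums

variable {α : Type*} {G : Type u} [LinearOrder α] [WellFoundedLT α] [AddCommSemigroup G]
  {c n : ℕ}

def initialSumColoring (e : α → G) (f : G → Fin c) (w : Fin n → α) (j : Fin n) : Fin c :=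
  f (tupSum fun i : Fin (j + 1) => e (w (Fin.castLE j.isLt i)))

theorem apply_tupSum_eq_of_homogeneous (e : α → G) (f : G → Fin c) {X : Set α}
    {r : Fin n → Fin c}
    (hr : ∀ w : Fin n → α, StrictMono w → (∀ j, w j ∈ X) → initialSumColoring e f w = r)
    {m : ℕ} (hm : m < n) (g : Fin (m + 1) → G) (hg : Function.Injective g)
    (hgH : ∀ j, g j ∈ e '' infiniteUpperPoints X) : f (tupSum g) = r ⟨m, hm⟩ := by
  choose x hxY hxg using hgH
  have hx : Function.Injective x := fun i j h => hg (by rw [← hxg, ← hxg, h])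
  set σ := Tuple.sort x
  have hmono : StrictMono (x ∘ σ) :=
    (Tuple.monotone_sort x).strictMono_of_injective (hx.comp σ.injective)
  have habove : {y ∈ X | ∀ j, (x ∘ σ) j < y}.Infinite :=
    (hxY (σ (Fin.last m))).2.mono fun y hy =>
      ⟨hy.1, fun j => (hmono.monotone (Fin.le_last j)).trans_lt hy.2⟩
  obtain ⟨w, hw, hwX, hwx⟩ := exists_strictMono_extension (Nat.succ_le_of_lt hm) hmono
    (fun j => (hxY _).1) habove
  calc f (tupSum g) = f (tupSum (g ∘ σ)) := by rw [tupSum_comp_perm]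
    _ = initialSumColoring e f w ⟨m, hm⟩ := by
      simp only [initialSumColoring]
      congr 2
      funext i
      simp [hwx i, hxg]
    _ = r ⟨m, hm⟩ := by rw [hr w hw hwX]

end PartialSums

theorem stmt15_general (l κ : Cardinal.{u}) (hl : ℵ₀ ≤ l) (c n : ℕ) (hn : 0 < n)
    (hschur : ∀ q : ℕ → Fin c, ∃ a b : ℕ, 0 < a ∧ 0 < b ∧ a + b ≤ n ∧
      q a = q b ∧ q b = q (a + b))
    (hpart : ∀ F : (Fin n → κ.ord.ToType) → (Fin n → Fin c),
      ∃ X : Set κ.ord.ToType, #X = l ∧ ∃ r : Fin n → Fin c,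
        ∀ g : Fin n → κ.ord.ToType, StrictMono g → (∀ j, g j ∈ X) → F g = r) :
    ∀ (G : Type u) [AddCommSemigroup G], #G = κ → ∀ f : G → Fin c,
      ∃ H : Set G, #H = l ∧ ∃ a b : ℕ, 0 < a ∧ 0 < b ∧ a + b ≤ n ∧
        ∃ i : Fin c, FSMono f {a, b, a + b} H i := by
  intro G _ hG f
  obtain ⟨e⟩ : Nonempty (κ.ord.ToType ≃ G) := by rw [← Cardinal.eq, mk_ord_toType, hG]
  obtain ⟨X, hX, r, hr⟩ := hpart (initialSumColoring e f)
  let q : ℕ → Fin c := fun k => r ⟨min (k - 1) (n - 1), by omega⟩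
  have hrq : ∀ m (hm : m < n), r ⟨m, hm⟩ = q (m + 1) := fun m hm =>
    congrArg r (Fin.ext (by simp only; omega))
  obtain ⟨a, b, ha, hb, hab, hqab, hqb⟩ := hschur q
  refine ⟨e '' infiniteUpperPoints X, ?_, a, b, ha, hb, hab, q a, ?_⟩
  · rw [mk_image_eq e.injective, mk_infiniteUpperPoints (hX ▸ hl), hX]
  · intro m hm g hg hgH
    simp only [Set.mem_insert_iff, Set.mem_singleton_iff] at hm
    have hmn : m < n := by omega
    rw [apply_tupSum_eq_of_homogeneous e f hr hmn g hg hgH, hrq m hmn]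
    rcases hm with h | h | h <;> rw [h] <;> simp only [hqab, hqb]

/-- Schur instance of the transfer scheme: Schur's theorem on {1,…,n} plus
κ → (λ)ⁿ_{cⁿ} yields the uncountable Hindman–Schur theorem. -/
theorem stmt15 (l κ : Cardinal.{u}) (hl : ℵ₀ ≤ l) (c n : ℕ) (hc : 0 < c) (hn : 0 < n)
    (hschur : ∀ q : ℕ → Fin c, ∃ a b : ℕ, 0 < a ∧ 0 < b ∧ a + b ≤ n ∧
      q a = q b ∧ q b = q (a + b))
    (hpart : ∀ F : (Fin n → κ.ord.ToType) → (Fin n → Fin c),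
      ∃ X : Set κ.ord.ToType, #X = l ∧ ∃ r : Fin n → Fin c,
        ∀ g : Fin n → κ.ord.ToType, StrictMono g → (∀ j, g j ∈ X) → F g = r) :
    ∀ (G : Type u) [AddCommSemigroup G], #G = κ → ∀ f : G → Fin c,
      ∃ H : Set G, #H = l ∧ ∃ a b : ℕ, 0 < a ∧ 0 < b ∧ a + b ≤ n ∧
        ∃ i : Fin c, FSMono f {a, b, a + b} H i :=
  stmt15_general l κ hl c n hn hschur hpart
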